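/- arXiv:2008.00454 — 3 statements merged into one kernel-verified Lean document; each statement's English description precedes it below -/
import Mathlib

section
/- Let $A$ be a finite set with $|A| = k+1 \ge 2$, let $b > 2\epsilon > 0$, and let $(X, d)$ be a metric space with a map $f : X \to X$ and Bowen metrics $d_n$. Suppose $\{A_0, A_1, \dots, A_k\}$ is a partition of $X$ such that $d(A_i, A_j) \ge b$ for all $1 \le i \ne j \le k$. Fix $n \ge 1$, and for each word $w = (i_0, \dots, i_{n-1}) \in \{0,\dots,k\}^n$ pick a point $x_w \in \bigcap_{j=0}^{n-1} f^{-j} \overline{A_{i_j}}$ (when nonempty). Then for any fixed word $w$, the number of words $w'$ with $x_{w'}$ defined and $d_n(x_w, x_{w'}) < \epsilon$ is at most $2^n$. -/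
/-- The Bowen metric `d_n(x,y) = max_{0 ≤ j ≤ n-1} d(fʲx, fʲy)` (for `n ≥ 1`). -/
noncomputable def bowenDist {X : Type*} [MetricSpace X] (f : X → X) (n : ℕ) (x y : X) : ℝ :=
  ⨆ j : Fin n, dist (f^[j] x) (f^[j] y)

/-- Counting lemma: let `{A₀, A₁, …, A_k}` (`k+1 ≥ 2` sets) be a partition of `X` whose
closures satisfy `d(Aᵢ, Aⱼ) ≥ b > 2ε` for `1 ≤ i ≠ j ≤ k`. For each word
`w ∈ {0,…,k}ⁿ` in a set `W` of "admissible" words, pick `x_w` with `fʲ(x_w) ∈ cl A_{w(j)}`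
for all `j < n`.  Then for a fixed `w ∈ W`, the number of `w' ∈ W` with
`dₙ(x_w, x_{w'}) < ε` is at most `2ⁿ`. -/
theorem count_close_words_le_two_pow {X : Type*} [MetricSpace X] (f : X → X)
    (k : ℕ) (hk : 1 ≤ k) (A : Fin (k + 1) → Set X)
    (hcover : (⋃ i, A i) = Set.univ)
    (hdisj : Pairwise (Function.onFun Disjoint A))
    (b ε : ℝ) (hε : 0 < ε) (hb : 2 * ε < b)
    (hsepd : ∀ i j : Fin (k + 1), i ≠ 0 → j ≠ 0 → i ≠ j →
      ∀ a ∈ closure (A i), ∀ a' ∈ closure (A j), b ≤ dist a a')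
    (n : ℕ) (hn : 1 ≤ n)
    (W : Set (Fin n → Fin (k + 1))) (x : (Fin n → Fin (k + 1)) → X)
    (hx : ∀ w ∈ W, ∀ j : Fin n, f^[(j : ℕ)] (x w) ∈ closure (A (w j)))
    (w : Fin n → Fin (k + 1)) (hw : w ∈ W) :
    {w' | w' ∈ W ∧ bowenDist f n (x w) (x w') < ε}.ncard ≤ 2 ^ n := by
  set S := {w' | w' ∈ W ∧ bowenDist f n (x w) (x w') < ε} with hS
  -- each coordinate distance is < ε
  have hdist : ∀ w' ∈ S, ∀ j : Fin n,
      dist (f^[(j : ℕ)] (x w)) (f^[(j : ℕ)] (x w')) < ε := by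
    intro w' hw' j
    refine lt_of_le_of_lt ?_ hw'.2
    exact le_ciSup (f := fun j : Fin n => dist (f^[(j : ℕ)] (x w)) (f^[(j : ℕ)] (x w')))
      (Set.Finite.bddAbove (Set.finite_range _)) j
  -- the map to zero-patterns is injective on S
  set g : (Fin n → Fin (k + 1)) → (Fin n → Bool) := fun w' j => decide (w' j = 0) with hg
  have hinj : Set.InjOn g S := by
    intro w₁ h₁ w₂ h₂ heq
    funext j
    have hpat : (decide (w₁ j = 0) : Bool) = decide (w₂ j = 0) := congrFun heq j
    by_cases h0 : w₁ j = 0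
    · have : w₂ j = 0 := by
        exact of_decide_eq_true (hpat ▸ decide_eq_true h0)
      rw [h0, this]
    · have h0' : w₂ j ≠ 0 := by
        intro hc
        exact h0 (of_decide_eq_true (hpat ▸ decide_eq_true hc))
      by_contra hne
      have hb' : b ≤ dist (f^[(j : ℕ)] (x w₁)) (f^[(j : ℕ)] (x w₂)) :=
        hsepd _ _ h0 h0' hne _ (hx w₁ h₁.1 j) _ (hx w₂ h₂.1 j)
      have htri := dist_triangle (f^[(j : ℕ)] (x w₁)) (f^[(j : ℕ)] (x w)) (f^[(j : ℕ)] (x w₂))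
      have h1 := hdist w₁ h₁ j
      rw [dist_comm] at h1
      have h2 := hdist w₂ h₂ j
      linarith
  calc S.ncard = (g '' S).ncard := (Set.ncard_image_of_injOn hinj).symm
    _ ≤ (Set.univ : Set (Fin n → Bool)).ncard :=
        Set.ncard_le_ncard (Set.subset_univ _) Set.finite_univ
    _ = 2 ^ n := by simp [Set.ncard_univ, Nat.card_eq_fintype_card]
end

section
/- Hölder/convexity property of pressure: with the separated-set pressure $P_K$ over a fixed compact set $K$, for sub-additive potential sequences $\mathcal{G}, \mathcal{H}$ and $p \in [0,1]$, $P_K(p\mathcal{G} + (1-p)\mathcal{H}) \le p P_K(\mathcal{G}) + (1-p) P_K(\mathcal{H})$, where $p\mathcal{G} + (1-p)\mathcal{H} = (p \log g_n + (1-p)\log h_n)_n$. -/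
/-!
For fixed `n` and `ε`, Hölder's inequality `∑ g^p h^(1-p) ≤ (∑ g)^p (∑ h)^(1-p)` on every
`(n,ε)`-separated set bounds the separated sum of the combined potential by
`sepSum G ^ p * sepSum H ^ (1-p)`; taking logarithms, dividing by `n` and passing to the
`limsup` in `n` and the supremum in `ε` gives the inequality. The only subtlety is `EReal`
arithmetic: a `limsup` of a sum is bounded by the sum of the `limsup`s only away from
`⊥ + ⊤`. This is excluded because separated sets have at most `C ^ n` points (compactness) and
sub-additivity gives `log gₙ ≤ n M`, so every pressure at scale `ε` is below `⊤`.
-/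

open Filter

/-- `E` is an `(n,ε)`-separated set for `f`: distinct points of `E` have Bowen
`dₙ`-distance at least `ε`. -/
def IsSep {X : Type*} [MetricSpace X] (f : X → X) (n : ℕ) (ε : ℝ) (E : Finset X) : Prop :=
  ∀ y ∈ E, ∀ z ∈ E, y ≠ z → ε ≤ bowenDist f n y z

/-- The supremum of `∑_{y ∈ E} gₙ(y) = ∑_{y ∈ E} exp (G n y)` over all `(n,ε)`-separated
subsets `E` of `K`; here `G n = log gₙ`. -/
noncomputable def sepSum {X : Type*} [MetricSpace X] (f : X → X) (K : Set X)
    (G : ℕ → X → ℝ) (n : ℕ) (ε : ℝ) : ℝ :=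
  sSup { r : ℝ | ∃ E : Finset X, ↑E ⊆ K ∧ IsSep f n ε E ∧ r = ∑ y ∈ E, Real.exp (G n y) }

/-- The separated-set unstable pressure of the sub-additive potential sequence
`G = (log gₙ)` over the fixed compact set `K`:
`P_K(G) = lim_{ε→0} limsup_n (1/n) log sepSum`, where the limit as `ε → 0` is realized
as the supremum over `ε > 0` (the inner quantity being antitone in `ε`). -/
noncomputable def sepPressure {X : Type*} [MetricSpace X] (f : X → X) (K : Set X)
    (G : ℕ → X → ℝ) : EReal :=
  ⨆ ε : {e : ℝ // 0 < e},
    limsup (fun n : ℕ => ((Real.log (sepSum f K G n ε) / n : ℝ) : EReal)) atTop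

open Finset Real

theorem Real.sum_rpow_mul_rpow_le {ι : Type*} (s : Finset ι) {u v : ι → ℝ}
    (hu : ∀ i ∈ s, 0 < u i) (hv : ∀ i ∈ s, 0 < v i) {p q : ℝ} (hp : 0 ≤ p) (hq : 0 ≤ q)
    (hpq : p + q = 1) :
    ∑ i ∈ s, u i ^ p * v i ^ q ≤ (∑ i ∈ s, u i) ^ p * (∑ i ∈ s, v i) ^ q := by
  rcases s.eq_empty_or_nonempty with rfl | hs
  · simp only [sum_empty]
    positivity
  set A := ∑ i ∈ s, u i
  set B := ∑ i ∈ s, v i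
  have hA : 0 < A := sum_pos hu hs
  have hB : 0 < B := sum_pos hv hs
  have hterm : ∀ i ∈ s, u i ^ p * v i ^ q ≤ A ^ p * B ^ q * (p * (u i / A) + q * (v i / B)) := by
    intro i hi
    have amgm := geom_mean_le_arith_mean2_weighted hp hq (div_pos (hu i hi) hA).le
      (div_pos (hv i hi) hB).le hpq
    rw [div_rpow (hu i hi).le hA.le, div_rpow (hv i hi).le hB.le] at amgm
    calc u i ^ p * v i ^ q = A ^ p * B ^ q * (u i ^ p / A ^ p * (v i ^ q / B ^ q)) := by
          field_simp
      _ ≤ _ := by gcongr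
  calc ∑ i ∈ s, u i ^ p * v i ^ q
      ≤ ∑ i ∈ s, A ^ p * B ^ q * (p * (u i / A) + q * (v i / B)) := sum_le_sum hterm
    _ = A ^ p * B ^ q * (p * (A / A) + q * (B / B)) := by
        rw [← mul_sum, sum_add_distrib, ← mul_sum, ← mul_sum, ← sum_div, ← sum_div]
    _ = A ^ p * B ^ q := by rw [div_self hA.ne', div_self hB.ne', mul_one, mul_one, hpq, mul_one]

theorem EReal.limsup_le_mul_add_mul {α : Type*} {l : Filter α} [l.NeBot] {u v w : α → ℝ}
    {p q : ℝ} (hp : 0 ≤ p) (hq : 0 ≤ q) (h : ∀ᶠ x in l, u x ≤ p * v x + q * w x)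
    (hv : limsup (fun x => (v x : EReal)) l ≠ ⊤) (hw : limsup (fun x => (w x : EReal)) l ≠ ⊤) :
    limsup (fun x => (u x : EReal)) l ≤
      p * limsup (fun x => (v x : EReal)) l + q * limsup (fun x => (w x : EReal)) l := by
  have hmul {c : ℝ} (hc : 0 ≤ c) (y : α → ℝ) :
      limsup (fun x => (c : EReal) * y x) l = c * limsup (fun x => (y x : EReal)) l :=
    EReal.limsup_const_mul_of_nonneg_of_ne_top (EReal.coe_nonneg.2 hc) (EReal.coe_ne_top c)
  have hpv : (p : EReal) * limsup (fun x => (v x : EReal)) l ≠ ⊤ := by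
    simp [EReal.mul_ne_top, hv, EReal.coe_nonneg.2 hp]
  have hqw : (q : EReal) * limsup (fun x => (w x : EReal)) l ≠ ⊤ := by
    simp [EReal.mul_ne_top, hw, EReal.coe_nonneg.2 hq]
  calc limsup (fun x => (u x : EReal)) l
      ≤ limsup ((fun x => (p : EReal) * v x) + fun x => (q : EReal) * w x) l :=
        limsup_le_limsup (h.mono fun x hx => by simp only [Pi.add_apply]; exact_mod_cast hx)
    _ ≤ limsup (fun x => (p : EReal) * v x) l + limsup (fun x => (q : EReal) * w x) l :=
        EReal.limsup_add_le (.inr (hmul hq w ▸ hqw)) (.inl (hmul hp v ▸ hpv))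
    _ = _ := by rw [hmul hp, hmul hq]

theorem le_mul_of_subadditive {X : Type*} {f : X → X} {P : ℕ → X → ℝ} {M : ℝ}
    (hM : ∀ x, P 1 x ≤ M)
    (hsub : ∀ x : X, ∀ m n : ℕ, 1 ≤ m → 1 ≤ n → P (m + n) x ≤ P n x + P m (f^[n] x))
    {n : ℕ} (hn : 1 ≤ n) (x : X) : P n x ≤ n * M := by
  induction n, hn using Nat.le_induction generalizing x with
  | base => simpa using hM x
  | succ n hn ih =>
    calc P (n + 1) x = P (1 + n) x := by rw [Nat.add_comm]
      _ ≤ P n x + P 1 (f^[n] x) := hsub x 1 n le_rfl hn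
      _ ≤ n * M + M := add_le_add (ih x) (hM _)
      _ = (n + 1 : ℕ) * M := by push_cast; ring

theorem exists_le_mul_of_subadditive {X : Type*} [TopologicalSpace X] [CompactSpace X]
    {f : X → X} {P : ℕ → X → ℝ} (hP : Continuous (P 1))
    (hsub : ∀ x : X, ∀ m n : ℕ, 1 ≤ m → 1 ≤ n → P (m + n) x ≤ P n x + P m (f^[n] x)) :
    ∃ M : ℝ, ∀ n, 1 ≤ n → ∀ x, P n x ≤ n * M := by
  obtain ⟨M, hM⟩ := (isCompact_range hP).bddAbove
  exact ⟨M, fun n hn => le_mul_of_subadditive (fun x => hM ⟨x, rfl⟩) hsub hn⟩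

section Separated

variable {X : Type*} [MetricSpace X] {f : X → X}

theorem bowenDist_lt {n : ℕ} (hn : 0 < n) {x y : X} {ε : ℝ}
    (h : ∀ j : Fin n, dist (f^[j] x) (f^[j] y) < ε) : bowenDist f n x y < ε := by
  have : Nonempty (Fin n) := ⟨⟨0, hn⟩⟩
  obtain ⟨j, hj⟩ := exists_eq_ciSup_of_finite (f := fun j : Fin n => dist (f^[j] x) (f^[j] y))
  rw [bowenDist, ← hj]
  exact h j

/-- A separated set injects into the itineraries through a finite `ε/2`-net `t`. -/
theorem IsSep.card_le_pow {t : Finset X} {ε : ℝ} (ht : ∀ x, ∃ c ∈ t, dist x c < ε / 2)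
    {n : ℕ} (hn : 0 < n) {E : Finset X} (hE : IsSep f n ε E) : #E ≤ #t ^ n := by
  choose c hct hc using ht
  let itinerary (y : X) (j : Fin n) : t := ⟨c (f^[j] y), hct _⟩
  have hinj : Set.InjOn itinerary E := by
    intro y hy z hz hyz
    by_contra hne
    refine (hE y hy z hz hne).not_gt (bowenDist_lt hn fun j => ?_)
    have hcj : c (f^[j] y) = c (f^[j] z) := congrArg Subtype.val (congrFun hyz j)
    calc dist (f^[j] y) (f^[j] z) ≤ dist (f^[j] y) (c (f^[j] y)) + dist (f^[j] z) (c (f^[j] y)) :=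
          dist_triangle_right _ _ _
      _ < ε / 2 + ε / 2 := add_lt_add (hc _) (hcj ▸ hc _)
      _ = ε := add_halves ε
  calc #E ≤ #(univ : Finset (Fin n → t)) := card_le_card_of_injOn itinerary (by simp) hinj
    _ = #t ^ n := by simp

theorem exists_card_le_pow_of_isSep [CompactSpace X] [Nonempty X] (f : X → X) {ε : ℝ}
    (hε : 0 < ε) :
    ∃ C : ℕ, 0 < C ∧ ∀ n, 0 < n → ∀ E : Finset X, IsSep f n ε E → #E ≤ C ^ n := by
  obtain ⟨t, ht⟩ := isCompact_univ.elim_finite_subcover (fun x : X => Metric.ball x (ε / 2))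
    (fun _ => Metric.isOpen_ball) fun x _ => Set.mem_iUnion.2 ⟨x, Metric.mem_ball_self (by linarith)⟩
  have hnet : ∀ x, ∃ c ∈ t, dist x c < ε / 2 := fun x => by simpa using ht (Set.mem_univ x)
  obtain ⟨c, hc, -⟩ := hnet (Classical.arbitrary X)
  exact ⟨#t, card_pos.2 ⟨c, hc⟩, fun n hn E hE => hE.card_le_pow hnet hn⟩

end Separated

section SepSum

variable {X : Type*} [MetricSpace X] {f : X → X} {K : Set X} {P : ℕ → X → ℝ} {n : ℕ} {ε : ℝ}

theorem sum_exp_le_of_isSep {N : ℕ} {B : ℝ} (hcard : ∀ E, IsSep f n ε E → #E ≤ N)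
    (hP : ∀ x, P n x ≤ B) {E : Finset X} (hE : IsSep f n ε E) :
    ∑ y ∈ E, exp (P n y) ≤ N * exp B :=
  calc ∑ y ∈ E, exp (P n y) ≤ #E • exp B := sum_le_card_nsmul _ _ _ fun y _ => exp_le_exp.2 (hP y)
    _ ≤ N * exp B := by
        rw [nsmul_eq_mul]
        gcongr
        exact_mod_cast hcard E hE

theorem sum_exp_le_sepSum {N : ℕ} {B : ℝ} (hcard : ∀ E, IsSep f n ε E → #E ≤ N)
    (hP : ∀ x, P n x ≤ B) {E : Finset X} (hEK : ↑E ⊆ K) (hE : IsSep f n ε E) :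
    ∑ y ∈ E, exp (P n y) ≤ sepSum f K P n ε := by
  refine le_csSup ⟨N * exp B, ?_⟩ ⟨E, hEK, hE, rfl⟩
  rintro r ⟨E', -, hE', rfl⟩
  exact sum_exp_le_of_isSep hcard hP hE'

theorem sepSum_le {N : ℕ} {B : ℝ} (hcard : ∀ E, IsSep f n ε E → #E ≤ N) (hP : ∀ x, P n x ≤ B) :
    sepSum f K P n ε ≤ N * exp B := by
  refine Real.sSup_le ?_ (by positivity)
  rintro r ⟨E, -, hE, rfl⟩
  exact sum_exp_le_of_isSep hcard hP hE

theorem sepSum_nonneg : 0 ≤ sepSum f K P n ε := by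
  refine Real.sSup_nonneg ?_
  rintro r ⟨E, -, -, rfl⟩
  positivity

theorem sepSum_pos (hK : K.Nonempty) {N : ℕ} {B : ℝ} (hcard : ∀ E, IsSep f n ε E → #E ≤ N)
    (hP : ∀ x, P n x ≤ B) : 0 < sepSum f K P n ε := by
  obtain ⟨y, hy⟩ := hK
  have hsingleton : IsSep f n ε {y} := by simp +contextual [IsSep]
  calc 0 < ∑ z ∈ {y}, exp (P n z) := by simpa using exp_pos _
    _ ≤ sepSum f K P n ε := sum_exp_le_sepSum hcard hP (by simpa using hy) hsingleton

theorem sepSum_emptySet : sepSum f ∅ P n ε = 0 := by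
  simp [sepSum, Set.subset_empty_iff, IsSep]

end SepSum

section Pressure

variable {X : Type*} [MetricSpace X] {f : X → X} {K : Set X} {n : ℕ} {ε : ℝ}

theorem sepSum_convex_le {G H : ℕ → X → ℝ} {N : ℕ} {BG BH : ℝ}
    (hcard : ∀ E, IsSep f n ε E → #E ≤ N) (hG : ∀ x, G n x ≤ BG) (hH : ∀ x, H n x ≤ BH)
    {p q : ℝ} (hp : 0 ≤ p) (hq : 0 ≤ q) (hpq : p + q = 1) :
    sepSum f K (fun n x => p * G n x + q * H n x) n ε ≤
      sepSum f K G n ε ^ p * sepSum f K H n ε ^ q := by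
  have hGnn : 0 ≤ sepSum f K G n ε := sepSum_nonneg
  have hHnn : 0 ≤ sepSum f K H n ε := sepSum_nonneg
  refine Real.sSup_le ?_ (by positivity)
  rintro r ⟨E, hEK, hE, rfl⟩
  calc ∑ y ∈ E, exp (p * G n y + q * H n y) = ∑ y ∈ E, exp (G n y) ^ p * exp (H n y) ^ q := by
        simp only [← exp_mul, ← exp_add, mul_comm]
    _ ≤ (∑ y ∈ E, exp (G n y)) ^ p * (∑ y ∈ E, exp (H n y)) ^ q :=
        Real.sum_rpow_mul_rpow_le E (fun _ _ => exp_pos _) (fun _ _ => exp_pos _) hp hq hpq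
    _ ≤ sepSum f K G n ε ^ p * sepSum f K H n ε ^ q := by
        gcongr
        exacts [sum_exp_le_sepSum hcard hG hEK hE, sum_exp_le_sepSum hcard hH hEK hE]

theorem log_sepSum_convex_le (hK : K.Nonempty) {G H : ℕ → X → ℝ} {N : ℕ} {BG BH : ℝ}
    (hcard : ∀ E, IsSep f n ε E → #E ≤ N) (hG : ∀ x, G n x ≤ BG) (hH : ∀ x, H n x ≤ BH)
    {p q : ℝ} (hp : 0 ≤ p) (hq : 0 ≤ q) (hpq : p + q = 1) :
    log (sepSum f K (fun n x => p * G n x + q * H n x) n ε) ≤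
      p * log (sepSum f K G n ε) + q * log (sepSum f K H n ε) := by
  have hGpos := sepSum_pos hK hcard hG
  have hHpos := sepSum_pos hK hcard hH
  have hpos : 0 < sepSum f K (fun n x => p * G n x + q * H n x) n ε :=
    sepSum_pos hK hcard (B := p * BG + q * BH) fun x => by gcongr <;> simp [hG, hH]
  calc log (sepSum f K (fun n x => p * G n x + q * H n x) n ε)
      ≤ log (sepSum f K G n ε ^ p * sepSum f K H n ε ^ q) :=
        log_le_log hpos (sepSum_convex_le hcard hG hH hp hq hpq)
    _ = p * log (sepSum f K G n ε) + q * log (sepSum f K H n ε) := by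
        rw [log_mul (rpow_pos_of_pos hGpos p).ne' (rpow_pos_of_pos hHpos q).ne',
          log_rpow hGpos, log_rpow hHpos]

noncomputable def sepPressureAt (f : X → X) (K : Set X) (P : ℕ → X → ℝ) (ε : ℝ) : EReal :=
  limsup (fun n : ℕ => ((log (sepSum f K P n ε) / n : ℝ) : EReal)) atTop

theorem sepPressureAt_le_sepPressure (P : ℕ → X → ℝ) (hε : 0 < ε) :
    sepPressureAt f K P ε ≤ sepPressure f K P :=
  le_iSup (fun e : {e : ℝ // 0 < e} => sepPressureAt f K P e) ⟨ε, hε⟩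

theorem sepPressureAt_ne_top (hK : K.Nonempty) {P : ℕ → X → ℝ} {C : ℕ} {M : ℝ} (hC : 0 < C)
    (hcard : ∀ n, 0 < n → ∀ E, IsSep f n ε E → #E ≤ C ^ n)
    (hP : ∀ n, 1 ≤ n → ∀ x, P n x ≤ n * M) : sepPressureAt f K P ε ≠ ⊤ := by
  refine ne_top_of_le_ne_top (EReal.coe_ne_top (log C + M)) (limsup_le_of_le (h := ?_))
  filter_upwards [eventually_ge_atTop 1] with n hn
  have hn' : (0 : ℝ) < n := by exact_mod_cast hn
  have hlog : log (sepSum f K P n ε) ≤ n * (log C + M) :=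
    calc log (sepSum f K P n ε) ≤ log ((C ^ n : ℕ) * exp (n * M)) :=
          log_le_log (sepSum_pos hK (hcard n hn) (hP n hn)) (sepSum_le (hcard n hn) (hP n hn))
      _ = n * (log C + M) := by
          push_cast
          rw [log_mul (by positivity) (exp_pos _).ne', log_pow, log_exp]
          ring
  exact EReal.coe_le_coe_iff.2 ((div_le_iff₀' hn').2 hlog)

theorem sepPressureAt_convex_le (hK : K.Nonempty) {G H : ℕ → X → ℝ} {C : ℕ} {MG MH : ℝ}
    (hC : 0 < C) (hcard : ∀ n, 0 < n → ∀ E, IsSep f n ε E → #E ≤ C ^ n)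
    (hG : ∀ n, 1 ≤ n → ∀ x, G n x ≤ n * MG) (hH : ∀ n, 1 ≤ n → ∀ x, H n x ≤ n * MH)
    {p q : ℝ} (hp : 0 ≤ p) (hq : 0 ≤ q) (hpq : p + q = 1) :
    sepPressureAt f K (fun n x => p * G n x + q * H n x) ε ≤
      p * sepPressureAt f K G ε + q * sepPressureAt f K H ε := by
  refine EReal.limsup_le_mul_add_mul hp hq ?_ (sepPressureAt_ne_top hK hC hcard hG)
    (sepPressureAt_ne_top hK hC hcard hH)
  filter_upwards [eventually_ge_atTop 1] with n hn
  rw [mul_div_assoc', mul_div_assoc', ← add_div]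
  gcongr
  exact log_sepSum_convex_le hK (hcard n hn) (hG n hn) (hH n hn) hp hq hpq

theorem sepPressure_emptySet (f : X → X) (P : ℕ → X → ℝ) : sepPressure f ∅ P = 0 := by
  simp [sepPressure, sepSum_emptySet]

end Pressure

theorem sepPressure_convex_general {X : Type*} [MetricSpace X] [CompactSpace X]
    (f : X → X) (K : Set X)
    (G H : ℕ → X → ℝ) (hGcont : ∀ n, Continuous (G n)) (hHcont : ∀ n, Continuous (H n))
    (hsubG : ∀ x : X, ∀ m n : ℕ, 1 ≤ m → 1 ≤ n → G (m + n) x ≤ G n x + G m (f^[n] x))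
    (hsubH : ∀ x : X, ∀ m n : ℕ, 1 ≤ m → 1 ≤ n → H (m + n) x ≤ H n x + H m (f^[n] x))
    (p : ℝ) (hp0 : 0 ≤ p) (hp1 : p ≤ 1) :
    sepPressure f K (fun n x => p * G n x + (1 - p) * H n x) ≤
      (p : EReal) * sepPressure f K G + ((1 - p : ℝ) : EReal) * sepPressure f K H := by
  rcases K.eq_empty_or_nonempty with rfl | hK
  · simp [sepPressure_emptySet]
  have : Nonempty X := ⟨hK.some⟩
  obtain ⟨MG, hMG⟩ := exists_le_mul_of_subadditive (hGcont 1) hsubG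
  obtain ⟨MH, hMH⟩ := exists_le_mul_of_subadditive (hHcont 1) hsubH
  refine iSup_le fun ⟨ε, hε⟩ => ?_
  obtain ⟨C, hC, hcard⟩ := exists_card_le_pow_of_isSep f hε
  calc sepPressureAt f K (fun n x => p * G n x + (1 - p) * H n x) ε
      ≤ p * sepPressureAt f K G ε + (1 - p : ℝ) * sepPressureAt f K H ε :=
        sepPressureAt_convex_le hK hC hcard hMG hMH hp0 (sub_nonneg.2 hp1) (add_sub_cancel p 1)
    _ ≤ _ := by
        gcongr <;> exact sepPressureAt_le_sepPressure _ hε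

/-- Convexity of the separated-set pressure over a fixed compact set: for sub-additive
potential sequences `G, H` and `p ∈ [0,1]`,
`P_K(p G + (1-p) H) ≤ p P_K(G) + (1-p) P_K(H)`. -/
theorem sepPressure_convex {X : Type*} [MetricSpace X] [CompactSpace X]
    (f : X → X) (hf : Continuous f) (K : Set X) (hK : IsCompact K)
    (G H : ℕ → X → ℝ) (hGcont : ∀ n, Continuous (G n)) (hHcont : ∀ n, Continuous (H n))
    (hsubG : ∀ x : X, ∀ m n : ℕ, 1 ≤ m → 1 ≤ n → G (m + n) x ≤ G n x + G m (f^[n] x))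
    (hsubH : ∀ x : X, ∀ m n : ℕ, 1 ≤ m → 1 ≤ n → H (m + n) x ≤ H n x + H m (f^[n] x))
    (p : ℝ) (hp0 : 0 ≤ p) (hp1 : p ≤ 1) :
    sepPressure f K (fun n x => p * G n x + (1 - p) * H n x) ≤
      (p : EReal) * sepPressure f K G + ((1 - p : ℝ) : EReal) * sepPressure f K H :=
  sepPressure_convex_general f K G H hGcont hHcont hsubG hsubH p hp0 hp1
end

section
/- Let $X$ be a compact metric space, $f : X \to X$ continuous, and suppose the map $\mu \mapsto h(\mu)$ from $f$-invariant Borel probability measures to $[0,\infty)$ is upper semi-continuous (weak-* topology) and affine. Let $(\phi_n)$ be a sequence of continuous functions such that $\mu \mapsto \int \phi_n \, d\mu$ is non-increasing in $n$ for every invariant $\mu$, with pointwise-in-$\mu$ limit $\Phi(\mu) = \inf_n \int \phi_n d\mu \in [-\infty,\infty)$. Then $\lim_{n\to\infty} \sup_\mu \left( h(\mu) + \int \phi_n \, d\mu \right) = \sup_\mu \left( h(\mu) + \Phi(\mu) \right)$, the suprema over all $f$-invariant Borel probability measures. -/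
/-!
The invariant probability measures form a compact space: the probability measures on `X` are
weak-* compact, and invariance is a closed condition because push-forward by `f` is continuous.
On it, `Fₙ μ = h μ + ∫ φₙ dμ` is upper semicontinuous and non-increasing in `n`, so `sup Fₙ`
decreases to its infimum `a`. Each `Fₙ` attains its supremum, so the superlevel sets
`{Fₙ ≥ a}` form a decreasing sequence of nonempty closed sets; a measure `μ` in their
intersection satisfies `a ≤ inf_n Fₙ μ`, which is the nontrivial inequality.
-/

open Filter MeasureTheory Set

theorem EReal.coe_add_iInf {ι : Sort*} (a : ℝ) (x : ι → EReal) :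
    (a : EReal) + ⨅ i, x i = ⨅ i, ((a : EReal) + x i) :=
  Monotone.map_iInf_of_continuousAt (f := fun y => (a : EReal) + y)
    ((EReal.continuousAt_add (.inl (EReal.coe_ne_top a)) (.inl (EReal.coe_ne_bot a))).comp
      (continuousAt_const.prodMk continuousAt_id))
    (fun _ _ h => add_le_add_right h _) (EReal.coe_add_top a)

theorem UpperSemicontinuous.exists_iSup_eq {K α : Type*} [TopologicalSpace K] [CompactSpace K]
    [Nonempty K] [CompleteLinearOrder α] {F : K → α} (hF : UpperSemicontinuous F) :
    ∃ x, ⨆ y, F y = F x := by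
  obtain ⟨x, -, hx⟩ := (hF.upperSemicontinuousOn univ).exists_isMaxOn univ_nonempty isCompact_univ
  exact ⟨x, le_antisymm (iSup_le fun y => hx (mem_univ y)) (le_iSup F x)⟩

theorem iInf_iSup_eq_iSup_iInf_of_upperSemicontinuous {K α : Type*} [TopologicalSpace K]
    [CompactSpace K] [CompleteLinearOrder α] {F : ℕ → K → α}
    (hF : ∀ n, UpperSemicontinuous (F n)) (hanti : ∀ x, Antitone fun n => F n x) :
    ⨅ n, ⨆ x, F n x = ⨆ x, ⨅ n, F n x := by
  refine le_antisymm ?_ (iSup_iInf_le_iInf_iSup fun x n => F n x)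
  rcases isEmpty_or_nonempty K with hK | hK
  · simp
  set a := ⨅ n, ⨆ x, F n x
  obtain ⟨x, hx⟩ := IsCompact.nonempty_iInter_of_sequence_nonempty_isCompact_isClosed
    (fun n => F n ⁻¹' Ici a) (fun n y hy => le_trans hy (hanti y n.le_succ))
    (fun n => (hF n).exists_iSup_eq.imp fun x hx => (iInf_le _ n).trans hx.le)
    ((hF 0).isClosed_preimage a).isCompact (fun n => (hF n).isClosed_preimage a)
  exact (le_iInf fun n => (mem_iInter.1 hx n : a ≤ F n x)).trans (le_iSup (fun x => ⨅ n, F n x) x)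

section InvariantMeasures

variable {X : Type*} [TopologicalSpace X] [HasOuterApproxClosed X] [MeasurableSpace X]
  [BorelSpace X] {f : X → X}

theorem isClosed_setOf_map_eq_self (hf : Continuous f) :
    IsClosed {μ : ProbabilityMeasure X | (μ : Measure X).map f = μ} := by
  have : {μ : ProbabilityMeasure X | (μ : Measure X).map f = μ}
      = {μ | μ.map hf.measurable.aemeasurable = μ} := by
    ext μ
    simp [← ProbabilityMeasure.toMeasure_injective.eq_iff]
  rw [this]
  exact isClosed_eq (ProbabilityMeasure.continuous_map hf) continuous_id

theorem compactSpace_subtype_map_eq_self [T2Space X] [CompactSpace X] (hf : Continuous f) :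
    CompactSpace {μ : ProbabilityMeasure X // (μ : Measure X).map f = μ} :=
  isCompact_iff_compactSpace.1 (isClosed_setOf_map_eq_self hf).isCompact

end InvariantMeasures

theorem tendsto_sup_entropy_add_integral_general {X : Type*} [MetricSpace X] [CompactSpace X]
    [MeasurableSpace X] [BorelSpace X]
    (f : X → X) (hf : Continuous f)
    (h : {μ : ProbabilityMeasure X // (μ : Measure X).map f = (μ : Measure X)} → ℝ)
    (husc : UpperSemicontinuous h)
    (φ : ℕ → C(X, ℝ))
    (hmono : ∀ μ : {μ : ProbabilityMeasure X // (μ : Measure X).map f = (μ : Measure X)},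
      Antitone fun n : ℕ => ∫ x, φ n x ∂(μ.1 : Measure X)) :
    Tendsto (fun n : ℕ =>
        ⨆ μ : {μ : ProbabilityMeasure X // (μ : Measure X).map f = (μ : Measure X)},
          ((h μ + ∫ x, φ n x ∂(μ.1 : Measure X) : ℝ) : EReal)) atTop
      (nhds (⨆ μ : {μ : ProbabilityMeasure X // (μ : Measure X).map f = (μ : Measure X)},
        ((h μ : EReal) + ⨅ n : ℕ, ((∫ x, φ n x ∂(μ.1 : Measure X) : ℝ) : EReal)))) := by
  have := compactSpace_subtype_map_eq_self hf
  set F : ℕ → {μ : ProbabilityMeasure X // (μ : Measure X).map f = (μ : Measure X)} → EReal :=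
    fun n μ => ((h μ + ∫ x, φ n x ∂(μ.1 : Measure X) : ℝ) : EReal)
  have hF_anti : ∀ μ, Antitone fun n => F n μ := fun μ m n hmn =>
    EReal.coe_le_coe_iff.2 (add_le_add_right (hmono μ hmn) _)
  have hF_usc : ∀ n, UpperSemicontinuous (F n) := fun n =>
    continuous_coe_real_ereal.comp_upperSemicontinuous
      (husc.add ((ProbabilityMeasure.continuous_integral_continuousMap (φ n)).comp
        continuous_subtype_val).upperSemicontinuous) EReal.coe_strictMono.monotone
  convert tendsto_atTop_iInf fun m n hmn => iSup_mono fun μ => hF_anti μ hmn using 2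
  rw [iInf_iSup_eq_iSup_iInf_of_upperSemicontinuous hF_usc hF_anti]
  simp_rw [F, EReal.coe_add_iInf, EReal.coe_add]

/-- Abstract variational convergence (cf. Proposition 4.4 in Cao–Feng–Huang): let `h` be an
upper semi-continuous, affine, non-negative, bounded "entropy" functional on the set of
`f`-invariant Borel probability measures of a compact metric space, and `(φₙ)` continuous
functions whose integrals are non-increasing in `n` for every invariant measure. Then
`lim_n sup_μ (h(μ) + ∫ φₙ dμ) = sup_μ (h(μ) + inf_n ∫ φₙ dμ)`, suprema over invariant `μ`. -/
theorem tendsto_sup_entropy_add_integral {X : Type*} [MetricSpace X] [CompactSpace X]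
    [MeasurableSpace X] [BorelSpace X]
    (f : X → X) (hf : Continuous f)
    (h : {μ : ProbabilityMeasure X // (μ : Measure X).map f = (μ : Measure X)} → ℝ)
    (husc : UpperSemicontinuous h)
    (hnonneg : ∀ μ, 0 ≤ h μ)
    (hbdd : ∃ C : ℝ, ∀ μ, h μ ≤ C)
    (haffine : ∀ μ ν κ : {μ : ProbabilityMeasure X // (μ : Measure X).map f = (μ : Measure X)},
      ∀ t : ℝ, 0 ≤ t → t ≤ 1 →
      (κ.1 : Measure X) =
          ENNReal.ofReal t • (μ.1 : Measure X) + ENNReal.ofReal (1 - t) • (ν.1 : Measure X) →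
      h κ = t * h μ + (1 - t) * h ν)
    (φ : ℕ → C(X, ℝ))
    (hmono : ∀ μ : {μ : ProbabilityMeasure X // (μ : Measure X).map f = (μ : Measure X)},
      Antitone fun n : ℕ => ∫ x, φ n x ∂(μ.1 : Measure X)) :
    Tendsto (fun n : ℕ =>
        ⨆ μ : {μ : ProbabilityMeasure X // (μ : Measure X).map f = (μ : Measure X)},
          ((h μ + ∫ x, φ n x ∂(μ.1 : Measure X) : ℝ) : EReal)) atTop
      (nhds (⨆ μ : {μ : ProbabilityMeasure X // (μ : Measure X).map f = (μ : Measure X)},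
        ((h μ : EReal) + ⨅ n : ℕ, ((∫ x, φ n x ∂(μ.1 : Measure X) : ℝ) : EReal)))) :=
  tendsto_sup_entropy_add_integral_general f hf h husc φ hmono
end
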